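/- For every t > 0 and every h ∈ K with ⟨h, S_t g_n⟩ = 0 for all n, one has (V_t S_t^* − P_{[t,∞)}) h = 0; consequently ‖V_t S_t^* − P_{[t,∞)}‖₂² = ∑_n ‖(V_t S_t^* − P_{[t,∞)}) S_t g_n‖² = ∑_n ‖V_t g_n − S_t g_n‖² whenever the right-hand side is finite. -/

import Mathlib

/-!
`S_t` is an isometry whose adjoint is the left shift, so `S_t S_t^* = P_{[t,∞)}` and
`S_t^* S_t = 1`. If `h ⊥ S_t g_n` for all `n`, then `S_t^* h ⊥ g_n`, i.e. `S_t^* h ∈ K₀`,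
where `V_t = S_t`; hence `(V_t S_t^* - P_{[t,∞)}) h = S_t S_t^* h - P_{[t,∞)} h = 0`.
So `T = V_t S_t^* - P_{[t,∞)}` vanishes on the orthogonal complement of the orthonormal
family `(S_t g_n)`. Computing `‖T‖₂` in a Hilbert basis extending this family, only the
vectors `S_t g_n` contribute, and `T S_t g_n = V_t g_n - S_t g_n`.
-/

open MeasureTheory ComplexInnerProductSpace

noncomputable section

/-- The squared Hilbert–Schmidt norm of a bounded operator on an inner product space,
as the supremum over finite orthonormal families `(e_x)_{x ∈ s}` of `∑ ‖T e_x‖²`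
(this equals `∑_n ‖T e_n‖²` for any orthonormal basis `(e_n)`). -/
def hsNormSq {H : Type*} [NormedAddCommGroup H] [InnerProductSpace ℂ H]
    (T : H →L[ℂ] H) : ENNReal :=
  ⨆ (s : Finset H) (_ : Orthonormal ℂ (fun x : s => (x : H))),
    ∑ x ∈ s, ENNReal.ofReal (‖T x‖ ^ 2)

/-- A bounded operator is Hilbert–Schmidt (`T ∈ s₂`) if `∑_n ‖T e_n‖² < ∞` for an
orthonormal basis. -/
def IsHilbertSchmidt {H : Type*} [NormedAddCommGroup H] [InnerProductSpace ℂ H]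
    (T : H →L[ℂ] H) : Prop := hsNormSq T < ⊤

/-- The Hilbert–Schmidt norm `‖T‖₂ = (∑_n ‖T e_n‖²)^{1/2}`. -/
def hsNorm {H : Type*} [NormedAddCommGroup H] [InnerProductSpace ℂ H]
    (T : H →L[ℂ] H) : ℝ := Real.sqrt (hsNormSq T).toReal

/-- The measure defining `K = L²(0,∞)`. -/
def mu0 : Measure ℝ := volume.restrict (Set.Ioi (0:ℝ))

/-- The Hilbert space `K = L²(0,∞)`. -/
abbrev Kspace := Lp ℂ 2 mu0

lemma Submodule.mem_orthogonal_span_range {𝕜 E ι : Type*} [RCLike 𝕜] [NormedAddCommGroup E]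
    [InnerProductSpace 𝕜 E] {v : ι → E} {x : E} (h : ∀ i, inner 𝕜 (v i) x = 0) :
    x ∈ (span 𝕜 (Set.range v))ᗮ :=
  (isOrtho_span.2 (by rintro _ ⟨i, rfl⟩ _ rfl; exact h i)).symm (mem_span_singleton_self x)

section HilbertSchmidt

variable {H : Type*} [NormedAddCommGroup H] [InnerProductSpace ℂ H]

lemma HilbertBasis.ofReal_norm_sq_eq_tsum [CompleteSpace H] {J : Type*} (b : HilbertBasis J ℂ H)
    (y : H) : ENNReal.ofReal (‖y‖ ^ 2) = ∑' j, ENNReal.ofReal (‖⟪b j, y⟫‖ ^ 2) := by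
  have h := lp.hasSum_norm (p := 2) (by norm_num) (b.repr y)
  simp only [b.repr_apply_apply, LinearIsometryEquiv.norm_map, ENNReal.toReal_ofNat,
    Real.rpow_two] at h
  rw [← h.tsum_eq, ENNReal.ofReal_tsum_of_nonneg (fun _ => sq_nonneg _) h.summable]

lemma Orthonormal.tsum_ofReal_norm_sq_le_hsNormSq {J : Type*} {v : J → H}
    (hv : Orthonormal ℂ v) (T : H →L[ℂ] H) :
    ∑' j, ENNReal.ofReal (‖T (v j)‖ ^ 2) ≤ hsNormSq T := by
  classical
  rw [ENNReal.tsum_eq_iSup_sum]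
  refine iSup_le fun s => ?_
  have hsub : (s.image v : Set H) ⊆ Set.range v := by simp
  have horth : Orthonormal ℂ (fun x : s.image v => (x : H)) :=
    hv.toSubtypeRange.comp _ (Set.inclusion_injective hsub)
  refine le_iSup₂_of_le (s.image v) horth (le_of_eq ?_)
  rw [Finset.sum_image fun a _ b _ h => hv.linearIndependent.injective h]

lemma hsNormSq_le_tsum_adjoint [CompleteSpace H] {J : Type*} (b : HilbertBasis J ℂ H)
    (T : H →L[ℂ] H) :
    hsNormSq T ≤ ∑' j, ENNReal.ofReal (‖ContinuousLinearMap.adjoint T (b j)‖ ^ 2) := by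
  refine iSup₂_le fun s hs => ?_
  calc ∑ x ∈ s, ENNReal.ofReal (‖T x‖ ^ 2)
      = ∑ x ∈ s, ∑' j, ENNReal.ofReal (‖⟪x, ContinuousLinearMap.adjoint T (b j)⟫‖ ^ 2) := by
        refine Finset.sum_congr rfl fun x _ => ?_
        simp only [b.ofReal_norm_sq_eq_tsum (T x), ← ContinuousLinearMap.adjoint_inner_left T x,
          norm_inner_symm]
    _ = ∑' j, ∑ x ∈ s, ENNReal.ofReal (‖⟪x, ContinuousLinearMap.adjoint T (b j)⟫‖ ^ 2) :=
        (Summable.tsum_finsetSum fun _ _ => ENNReal.summable).symm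
    _ ≤ ∑' j, ENNReal.ofReal (‖ContinuousLinearMap.adjoint T (b j)‖ ^ 2) := by
        refine ENNReal.tsum_le_tsum fun j => ?_
        rw [← ENNReal.ofReal_sum_of_nonneg fun _ _ => sq_nonneg _]
        refine ENNReal.ofReal_le_ofReal ?_
        simpa only [Finset.sum_attach s fun x => ‖⟪x, ContinuousLinearMap.adjoint T (b j)⟫‖ ^ 2]
          using hs.sum_inner_products_le (ContinuousLinearMap.adjoint T (b j)) (s := s.attach)

/-- Bessel's inequality for `T` and for `T†` gives the chain
`‖T‖₂² ≤ ∑ ‖T† bⱼ‖² ≤ ‖T†‖₂² ≤ ∑ ‖T bⱼ‖² ≤ ‖T‖₂²`. -/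
lemma hsNormSq_eq_tsum [CompleteSpace H] {J : Type*} (b : HilbertBasis J ℂ H) (T : H →L[ℂ] H) :
    hsNormSq T = ∑' j, ENNReal.ofReal (‖T (b j)‖ ^ 2) := by
  have h := hsNormSq_le_tsum_adjoint b (ContinuousLinearMap.adjoint T)
  rw [ContinuousLinearMap.adjoint_adjoint] at h
  exact le_antisymm
    ((hsNormSq_le_tsum_adjoint b T).trans
      ((b.orthonormal.tsum_ofReal_norm_sq_le_hsNormSq _).trans h))
    (b.orthonormal.tsum_ofReal_norm_sq_le_hsNormSq T)

lemma hsNormSq_eq_tsum_of_orthonormal [CompleteSpace H] {J : Type*} {e : J → H}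
    (he : Orthonormal ℂ e) {T : H →L[ℂ] H} (hT : ∀ h, (∀ j, ⟪e j, h⟫ = 0) → T h = 0) :
    hsNormSq T = ∑' j, ENNReal.ofReal (‖T (e j)‖ ^ 2) := by
  obtain ⟨w, b, hew, hb⟩ := he.toSubtypeRange.exists_hilbertBasis_extension
  have hw : Orthonormal ℂ ((↑) : w → H) := hb ▸ b.orthonormal
  have hvanish : ∀ x ∈ w, x ∉ Set.range e → T x = 0 := fun x hx hxe =>
    hT x fun j => hw.inner_eq_zero (i := ⟨e j, hew ⟨j, rfl⟩⟩) (j := ⟨x, hx⟩)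
      fun h => hxe ⟨j, congrArg Subtype.val h⟩
  set φ : H → ENNReal := fun x => ENNReal.ofReal (‖T x‖ ^ 2)
  have hind : w.indicator φ = (Set.range e).indicator φ := by
    funext x
    by_cases hxe : x ∈ Set.range e
    · simp [hxe, hew hxe]
    · by_cases hx : x ∈ w <;> simp [φ, hx, hxe, hvanish]
  rw [hsNormSq_eq_tsum b, hb, ← tsum_range φ he.linearIndependent.injective, tsum_subtype w φ,
    tsum_subtype _ φ, hind]

lemma hsNorm_sq_eq_tsum_of_orthonormal [CompleteSpace H] {J : Type*} {e : J → H}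
    (he : Orthonormal ℂ e) {T : H →L[ℂ] H} (hT : ∀ h, (∀ j, ⟪e j, h⟫ = 0) → T h = 0)
    (hsum : Summable fun j => ‖T (e j)‖ ^ 2) :
    hsNorm T ^ 2 = ∑' j, ‖T (e j)‖ ^ 2 := by
  rw [hsNorm, Real.sq_sqrt ENNReal.toReal_nonneg, hsNormSq_eq_tsum_of_orthonormal he hT,
    ← ENNReal.ofReal_tsum_of_nonneg (fun _ => sq_nonneg _) hsum,
    ENNReal.toReal_ofReal (tsum_nonneg fun _ => sq_nonneg _)]

end HilbertSchmidt

section Shift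

open Set

def IsRightShift (S : Kspace →L[ℂ] Kspace) (t : ℝ) : Prop :=
  ∀ f : Kspace, (S f : ℝ → ℂ) =ᵐ[mu0] fun x => if t < x then f (x - t) else 0

lemma integral_mu0_shift {t : ℝ} (ht : 0 ≤ t) (φ : ℝ → ℂ) :
    ∫ x, (if t < x then φ (x - t) else 0) ∂mu0 = ∫ x, φ x ∂mu0 := by
  have hind : (Ioi 0).indicator (fun x => if t < x then φ (x - t) else 0)
      = fun x => (Ioi 0).indicator φ (x - t) := by
    funext x
    by_cases hx : t < x
    · simp [hx, ht.trans_lt hx]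
    · simp [hx]
  rw [mu0, ← integral_indicator measurableSet_Ioi, ← integral_indicator measurableSet_Ioi, hind,
    integral_sub_right_eq_self]

lemma inner_mu0_eq_integral (f g : Kspace) : ⟪f, g⟫ = ∫ x, (starRingEnd ℂ) (f x) * g x ∂mu0 := by
  simp only [MeasureTheory.L2.inner_def, RCLike.inner_apply, mul_comm]

lemma ae_mu0_comp_sub {φ ψ : ℝ → ℂ} (h : φ =ᵐ[mu0] ψ) (t : ℝ) :
    ∀ᵐ x ∂mu0, t < x → φ (x - t) = ψ (x - t) := by
  have hmp : MeasurePreserving (· - t) (volume.restrict (Ioi t)) mu0 := by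
    simpa [mu0, sub_eq_add_neg] using
      (measurePreserving_add_right volume (-t)).restrict_preimage (measurableSet_Ioi (a := 0))
  have := (ae_restrict_iff' measurableSet_Ioi).1 (hmp.quasiMeasurePreserving.ae_eq_comp h)
  exact ae_mono Measure.restrict_le_self this

namespace IsRightShift

variable {S : Kspace →L[ℂ] Kspace} {t : ℝ}

lemma inner_map_map (hS : IsRightShift S t) (ht : 0 ≤ t) (f g : Kspace) :
    ⟪S f, S g⟫ = ⟪f, g⟫ := by
  rw [inner_mu0_eq_integral, inner_mu0_eq_integral]
  conv_rhs => rw [← integral_mu0_shift ht]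
  refine integral_congr_ae ?_
  filter_upwards [hS f, hS g] with x hfx hgx
  rw [hfx, hgx]
  split_ifs <;> simp

lemma adjoint_apply_ae (hS : IsRightShift S t) (ht : 0 ≤ t) (f : Kspace) :
    (ContinuousLinearMap.adjoint S f : ℝ → ℂ) =ᵐ[mu0] fun x => f (x + t) := by
  have hmp : MeasurePreserving (· + t) mu0 (volume.restrict (Ioi t)) := by
    simpa [mu0] using
      (measurePreserving_add_right volume t).restrict_preimage (measurableSet_Ioi (a := t))
  have hmem : MemLp (fun x => f (x + t)) 2 mu0 :=
    ((Lp.memLp f).mono_measure (Measure.restrict_mono (Ioi_subset_Ioi ht) le_rfl))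
      |>.comp_measurePreserving hmp
  suffices ContinuousLinearMap.adjoint S f = hmem.toLp _ from this ▸ hmem.coeFn_toLp
  refine ext_inner_right ℂ fun g => ?_
  rw [ContinuousLinearMap.adjoint_inner_left, inner_mu0_eq_integral, inner_mu0_eq_integral]
  conv_rhs => rw [← integral_mu0_shift ht]
  refine integral_congr_ae ?_
  filter_upwards [hS g, ae_mu0_comp_sub hmem.coeFn_toLp t] with x hgx hux
  rw [hgx]
  split_ifs with hx
  · simp [hux hx]
  · simp

lemma adjoint_map (hS : IsRightShift S t) (ht : 0 ≤ t) (f : Kspace) :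
    ContinuousLinearMap.adjoint S (S f) = f :=
  ext_inner_right ℂ fun g => by
    rw [ContinuousLinearMap.adjoint_inner_left, hS.inner_map_map ht]

lemma map_adjoint {P : Kspace →L[ℂ] Kspace}
    (hP : ∀ f : Kspace, (P f : ℝ → ℂ) =ᵐ[mu0] fun x => if t ≤ x then f x else 0)
    (hS : IsRightShift S t) (ht : 0 ≤ t) (h : Kspace) :
    S (ContinuousLinearMap.adjoint S h) = P h := by
  refine Lp.ext ?_
  filter_upwards [hS _, hP h, ae_mu0_comp_sub (hS.adjoint_apply_ae ht h) t,
    ae_mono Measure.restrict_le_self (volume.ae_ne t)] with x hSx hPx hx hxt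
  rw [hSx, hPx]
  rcases lt_or_gt_of_ne hxt with hlt | hgt
  · simp [not_lt.2 hlt.le, not_le.2 hlt]
  · simp [hgt, hgt.le, hx hgt]

lemma orthonormal_comp (hS : IsRightShift S t) (ht : 0 ≤ t) {J : Type*} {v : J → Kspace}
    (hv : Orthonormal ℂ v) : Orthonormal ℂ (fun j => S (v j)) :=
  hv.comp_linearIsometry (S.toLinearMap.isometryOfInner (hS.inner_map_map ht))

end IsRightShift

end Shift

theorem stmt_15_general {ι : Type*} [LinearOrder ι] [LocallyFiniteOrderBot ι] [WellFoundedLT ι]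
    (F : ι → Kspace)
    (S : ℝ → Kspace →L[ℂ] Kspace)
    (hS : ∀ t ≥ (0:ℝ), ∀ f : Kspace,
      (S t f : ℝ → ℂ) =ᵐ[mu0] fun x => if t < x then f (x - t) else 0)
    (Pinf : ℝ → Kspace →L[ℂ] Kspace)
    (hPinf : ∀ (t : ℝ) (f : Kspace),
      (Pinf t f : ℝ → ℂ) =ᵐ[mu0] fun x => if t ≤ x then f x else 0)
    (V : ℝ → Kspace →L[ℂ] Kspace)
    (hV₀ : ∀ t ≥ (0:ℝ), ∀ h ∈ (Submodule.span ℂ (Set.range F))ᗮ, V t h = S t h) :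
    ∀ t > (0:ℝ),
      (∀ h : Kspace, (∀ n, ⟪S t (InnerProductSpace.gramSchmidtNormed ℂ F n), h⟫ = 0) →
        ((V t).comp (ContinuousLinearMap.adjoint (S t)) - Pinf t) h = 0) ∧
      ((Summable fun n =>
          ‖V t (InnerProductSpace.gramSchmidtNormed ℂ F n) - S t (InnerProductSpace.gramSchmidtNormed ℂ F n)‖ ^ 2) →
        hsNorm ((V t).comp (ContinuousLinearMap.adjoint (S t)) - Pinf t) ^ 2 =
          ∑' n, ‖((V t).comp (ContinuousLinearMap.adjoint (S t)) - Pinf t)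
            (S t (InnerProductSpace.gramSchmidtNormed ℂ F n))‖ ^ 2 ∧
        (∑' n, ‖((V t).comp (ContinuousLinearMap.adjoint (S t)) - Pinf t)
            (S t (InnerProductSpace.gramSchmidtNormed ℂ F n))‖ ^ 2) =
          ∑' n, ‖V t (InnerProductSpace.gramSchmidtNormed ℂ F n) - S t (InnerProductSpace.gramSchmidtNormed ℂ F n)‖ ^ 2) := by
  intro t ht
  set g := InnerProductSpace.gramSchmidtNormed ℂ F
  have hSt : IsRightShift (S t) t := hS t ht.le
  set T := (V t).comp (ContinuousLinearMap.adjoint (S t)) - Pinf t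
  have hker : ∀ h, (∀ n, ⟪S t (g n), h⟫ = 0) → T h = 0 := by
    intro h hh
    have hK₀ : ContinuousLinearMap.adjoint (S t) h ∈ (Submodule.span ℂ (Set.range F))ᗮ := by
      rw [← InnerProductSpace.span_gramSchmidt ℂ F,
        ← InnerProductSpace.span_gramSchmidtNormed_range]
      exact Submodule.mem_orthogonal_span_range fun n => by
        rw [ContinuousLinearMap.adjoint_inner_right]; exact hh n
    simp [T, hV₀ t ht.le _ hK₀, hSt.map_adjoint (hPinf t) ht.le]
  have hTg : ∀ n, T (S t (g n)) = V t (g n) - S t (g n) := fun n => by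
    simp only [T, sub_apply, ContinuousLinearMap.comp_apply,
      ← hSt.map_adjoint (hPinf t) ht.le, hSt.adjoint_map ht.le]
  refine ⟨hker, fun hsum => ⟨?_, tsum_congr fun n => by rw [hTg]⟩⟩
  have hsumT : Summable fun n => ‖T (S t (g n))‖ ^ 2 := by simpa only [hTg] using hsum
  have hker' : ∀ h, (∀ n : {n | g n ≠ 0}, ⟪S t (g n), h⟫ = 0) → T h = 0 := fun h hh =>
    hker h fun n => (eq_or_ne (g n) 0).elim (fun hgn => by simp [hgn]) fun hgn => hh ⟨n, hgn⟩
  have hsupp : (Function.support fun n => ‖T (S t (g n))‖ ^ 2) ⊆ {n | g n ≠ 0} :=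
    fun n hn hgn => by simp [hgn] at hn
  rw [hsNorm_sq_eq_tsum_of_orthonormal
      (hSt.orthonormal_comp ht.le (InnerProductSpace.gramSchmidtNormed_orthonormal' F)) hker'
      (hsumT.subtype _),
    tsum_subtype_eq_of_support_subset hsupp]

/-- in the construction (pairwise distinct `λ_n` satisfying condition
(1), `f_n(x) = (-2 Re λ_n)^{1/2} e^{λ_n x}`, `g_n` their Gram–Schmidt
orthonormalization, `K₀ = (span{f_n})^⊥`, `V_t h = S_t h` on `K₀`,
`V_t g_n = e^{-i t Im λ_n} g_n`): for every `t > 0` and every `h ∈ K` with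
`⟨h, S_t g_n⟩ = 0` for all `n`, one has `(V_t S_t^* - P_{[t,∞)}) h = 0`; consequently
`‖V_t S_t^* - P_{[t,∞)}‖₂² = ∑_n ‖(V_t S_t^* - P_{[t,∞)}) S_t g_n‖²
= ∑_n ‖V_t g_n - S_t g_n‖²` whenever the right-hand side is finite. -/
theorem stmt_15 {ι : Type*} [LinearOrder ι] [LocallyFiniteOrderBot ι] [WellFoundedLT ι]
    [Countable ι] (l : ι → ℂ)
    (h1 : ∀ n, (l n).re < 0)
    (h2 : Summable fun n => |(l n).re|)
    (h3 : ∃ R > (0:ℝ), ∀ n, |(l n).im| < R)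
    (hdist : Function.Injective l)
    (F : ι → Kspace)
    (hF : ∀ n, (F n : ℝ → ℂ) =ᵐ[mu0]
      fun x => (Real.sqrt (-2 * (l n).re) : ℂ) * Complex.exp (l n * x))
    (S : ℝ → Kspace →L[ℂ] Kspace)
    (hS : ∀ t ≥ (0:ℝ), ∀ f : Kspace,
      (S t f : ℝ → ℂ) =ᵐ[mu0] fun x => if t < x then f (x - t) else 0)
    (Pinf : ℝ → Kspace →L[ℂ] Kspace)
    (hPinf : ∀ (t : ℝ) (f : Kspace),
      (Pinf t f : ℝ → ℂ) =ᵐ[mu0] fun x => if t ≤ x then f x else 0)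
    (V : ℝ → Kspace →L[ℂ] Kspace)
    (hV₀ : ∀ t ≥ (0:ℝ), ∀ h ∈ (Submodule.span ℂ (Set.range F))ᗮ, V t h = S t h)
    (hVg : ∀ t ≥ (0:ℝ), ∀ n, V t (InnerProductSpace.gramSchmidtNormed ℂ F n) =
      Complex.exp (-Complex.I * t * (l n).im) • InnerProductSpace.gramSchmidtNormed ℂ F n) :
    ∀ t > (0:ℝ),
      (∀ h : Kspace, (∀ n, ⟪S t (InnerProductSpace.gramSchmidtNormed ℂ F n), h⟫ = 0) →
        ((V t).comp (ContinuousLinearMap.adjoint (S t)) - Pinf t) h = 0) ∧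
      ((Summable fun n =>
          ‖V t (InnerProductSpace.gramSchmidtNormed ℂ F n) - S t (InnerProductSpace.gramSchmidtNormed ℂ F n)‖ ^ 2) →
        hsNorm ((V t).comp (ContinuousLinearMap.adjoint (S t)) - Pinf t) ^ 2 =
          ∑' n, ‖((V t).comp (ContinuousLinearMap.adjoint (S t)) - Pinf t)
            (S t (InnerProductSpace.gramSchmidtNormed ℂ F n))‖ ^ 2 ∧
        (∑' n, ‖((V t).comp (ContinuousLinearMap.adjoint (S t)) - Pinf t)
            (S t (InnerProductSpace.gramSchmidtNormed ℂ F n))‖ ^ 2) =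
          ∑' n, ‖V t (InnerProductSpace.gramSchmidtNormed ℂ F n) - S t (InnerProductSpace.gramSchmidtNormed ℂ F n)‖ ^ 2) :=
  stmt_15_general F S hS Pinf hPinf V hV₀
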